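/- Let (M,d) be a locally compact, complete metric space and let C ⊆ M be a closed set satisfying the cusp condition with respect to d. Let U ⊆ M be open and let φ : U → ℝⁿ be a homeomorphism onto ℝⁿ such that both φ and φ⁻¹ are locally bi-Lipschitz (with respect to the restriction of d to U and the Euclidean metric on ℝⁿ). Then φ(C ∩ U) is a closed subset of ℝⁿ satisfying the cusp condition with respect to the Euclidean metric. -/

import Mathlib

/-!
Since `ψ` is a continuous inverse of `φ` on `U`, `φ '' (C ∩ U) = ψ ⁻¹' C`, which is closed and
whose frontier and interior are carried by `ψ` into those of `C`. On compact sets the local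
Lipschitz bounds of `φ` and `ψ` become uniform on balls of a fixed radius (a Lebesgue number
argument), so a cusp witness for `C` at scale `ε / c` is moved by `φ` to one at scale `ε`, with
the same exponent `r` and a smaller `ρ`. A chord–arc path of `C` near a point is short, hence
stays where `φ` is `L`-bi-Lipschitz; its image is a chord–arc path with `D` replaced by
`D / L ^ (p + 1)`.
-/

open Set Metric

/-- A closed set `F` in a topological space, equipped with a distance function `d`, has
at worst polynomial outward cusps (with respect to `d`). -/
def HasPolyOutwardCusps {M : Type*} [TopologicalSpace M] (d : M → M → ℝ) (F : Set M) : Prop :=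
  ∀ K : Set M, IsCompact K → ∃ ε₀ ρ r : ℝ, 0 < ε₀ ∧ 0 < ρ ∧ 1 ≤ r ∧
    ∀ z ∈ K ∩ frontier F, ∀ ε : ℝ, 0 < ε → ε < ε₀ →
      ∃ x ∈ F, d x z < ε ∧ ∀ y : M, d x y < ρ * ε ^ r → y ∈ F ∧ d z y < ε

/-- Sums over partitions `0 = t₀ ≤ ⋯ ≤ tₙ = 1` of `[0,1]` for a path `γ` and distance `d`. -/
def partitionSums {M : Type*} (d : M → M → ℝ) (γ : ℝ → M) : Set ℝ :=
  { L | ∃ (n : ℕ) (t : Fin (n + 1) → ℝ), Monotone t ∧ t 0 = 0 ∧ t (Fin.last n) = 1 ∧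
      L = ∑ i : Fin n, d (γ (t i.castSucc)) (γ (t i.succ)) }

/-- Total-variation length of a path `γ : [0,1] → M` with respect to `d`. -/
noncomputable def pathLength {M : Type*} (d : M → M → ℝ) (γ : ℝ → M) : ℝ :=
  sSup (partitionSums d γ)

/-- A path is rectifiable w.r.t. `d` if its total variation is finite. -/
def IsRectifiable {M : Type*} (d : M → M → ℝ) (γ : ℝ → M) : Prop :=
  BddAbove (partitionSums d γ)

/-- The "no narrow fjords" condition for a closed set `F` with respect to `d`. -/
def NoNarrowFjords {M : Type*} [TopologicalSpace M] (d : M → M → ℝ) (F : Set M) : Prop :=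
  ∀ x ∈ F, ∃ (p : ℕ) (K : Set M) (D : ℝ), 1 ≤ p ∧ IsCompact K ∧ K ⊆ F ∧
    K ∈ nhdsWithin x F ∧ 0 < D ∧
    ∀ y ∈ K, ∀ z ∈ K, ∃ γ : ℝ → M,
      ContinuousOn γ (Icc (0 : ℝ) 1) ∧ γ 0 = y ∧ γ 1 = z ∧
      (∀ t ∈ Icc (0 : ℝ) 1, γ t ∈ F) ∧
      IsRectifiable d γ ∧
      (∃ S : Finset M, ∀ t ∈ Icc (0 : ℝ) 1, γ t ∉ S → γ t ∈ interior F) ∧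
      d y z ≥ D * pathLength d γ ^ p

/-- The cusp condition: at worst polynomial outward cusps and no narrow fjords. -/
def CuspCondition {M : Type*} [TopologicalSpace M] (d : M → M → ℝ) (F : Set M) : Prop :=
  HasPolyOutwardCusps d F ∧ NoNarrowFjords d F

open Filter Topology
open scoped NNReal

theorem IsCompact.exists_forall_lipschitzOnWith_ball {X Y : Type*} [PseudoMetricSpace X]
    [PseudoEMetricSpace Y] {S : Set X} {f : X → Y} (hS : IsCompact S)
    (hf : ∀ x ∈ S, ∃ K, ∃ t ∈ 𝓝 x, LipschitzOnWith K f t) :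
    ∃ δ > 0, ∃ L, ∀ a ∈ S, LipschitzOnWith L f (ball a δ) := by
  choose K t ht hKt using hf
  obtain ⟨I, hI⟩ := hS.elim_nhds_subcover' (fun x hx => interior (t x hx))
    fun x hx => interior_mem_nhds.2 (ht x hx)
  obtain ⟨δ, hδ, hball⟩ := lebesgue_number_lemma_of_metric hS
    (c := fun i : I => interior (t i i.1.2)) (fun _ => isOpen_interior) fun x hx => by
      obtain ⟨i, hiI, hxi⟩ := mem_iUnion₂.1 (hI hx)
      exact mem_iUnion.2 ⟨⟨i, hiI⟩, hxi⟩
  refine ⟨δ, hδ, I.sup fun i => K i i.2, fun a ha => ?_⟩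
  obtain ⟨i, hi⟩ := hball a ha
  exact ((hKt i i.1.2).mono (hi.trans interior_subset)).weaken
    (Finset.le_sup (f := fun i : S => K i i.2) i.2)

section PathLength

variable {X Y : Type*} [PseudoMetricSpace X] [PseudoMetricSpace Y] {γ : ℝ → X}

theorem dist_add_dist_mem_partitionSums {s : ℝ} (hs : s ∈ Icc (0 : ℝ) 1) :
    dist (γ 0) (γ s) + dist (γ s) (γ 1) ∈ partitionSums dist γ := by
  refine ⟨2, ![0, s, 1], ?_, rfl, rfl, by simp [Fin.sum_univ_two]⟩
  intro i j hij
  fin_cases i <;> fin_cases j <;> simp_all [Fin.le_def]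

theorem dist_le_pathLength (hγ : IsRectifiable dist γ) {s : ℝ} (hs : s ∈ Icc (0 : ℝ) 1) :
    dist (γ 0) (γ s) ≤ pathLength dist γ :=
  (le_add_of_nonneg_right dist_nonneg).trans (le_csSup hγ (dist_add_dist_mem_partitionSums hs))

theorem pathLength_nonneg (hγ : IsRectifiable dist γ) : 0 ≤ pathLength dist γ :=
  dist_nonneg.trans (dist_le_pathLength hγ (left_mem_Icc.2 zero_le_one))

theorem le_mul_pathLength_of_mem_partitionSums_comp {f : X → Y} {K : ℝ≥0} {A : Set X}
    (hf : LipschitzOnWith K f A) (hγA : ∀ t ∈ Icc (0 : ℝ) 1, γ t ∈ A)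
    (hγ : IsRectifiable dist γ) {L : ℝ} (hL : L ∈ partitionSums dist (f ∘ γ)) :
    L ≤ K * pathLength dist γ := by
  obtain ⟨m, t, hmono, ht0, ht1, rfl⟩ := hL
  have ht : ∀ i, γ (t i) ∈ A := fun i =>
    hγA _ ⟨ht0 ▸ hmono (Fin.zero_le i), ht1 ▸ hmono (Fin.le_last i)⟩
  calc ∑ i : Fin m, dist (f (γ (t i.castSucc))) (f (γ (t i.succ)))
      ≤ ∑ i : Fin m, K * dist (γ (t i.castSucc)) (γ (t i.succ)) :=
        Finset.sum_le_sum fun i _ => hf.dist_le_mul _ (ht _) _ (ht _)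
    _ = K * ∑ i : Fin m, dist (γ (t i.castSucc)) (γ (t i.succ)) := by rw [Finset.mul_sum]
    _ ≤ K * pathLength dist γ := by
        gcongr
        exact le_csSup hγ ⟨m, t, hmono, ht0, ht1, rfl⟩

theorem IsRectifiable.comp_lipschitzOnWith {f : X → Y} {K : ℝ≥0} {A : Set X}
    (hγ : IsRectifiable dist γ) (hf : LipschitzOnWith K f A)
    (hγA : ∀ t ∈ Icc (0 : ℝ) 1, γ t ∈ A) : IsRectifiable dist (f ∘ γ) :=
  ⟨_, fun _ => le_mul_pathLength_of_mem_partitionSums_comp hf hγA hγ⟩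

theorem pathLength_comp_le_of_lipschitzOnWith {f : X → Y} {K : ℝ≥0} {A : Set X}
    (hγ : IsRectifiable dist γ) (hf : LipschitzOnWith K f A)
    (hγA : ∀ t ∈ Icc (0 : ℝ) 1, γ t ∈ A) :
    pathLength dist (f ∘ γ) ≤ K * pathLength dist γ :=
  csSup_le ⟨_, dist_add_dist_mem_partitionSums (left_mem_Icc.2 zero_le_one)⟩
    fun _ => le_mul_pathLength_of_mem_partitionSums_comp hf hγA hγ

end PathLength

/-- `NoNarrowFjords d F` asks for these paths between any two points of its compact set `K`. -/
def IsChordArcPath {M : Type*} [TopologicalSpace M] (d : M → M → ℝ) (F : Set M) (D : ℝ)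
    (p : ℕ) (y z : M) (γ : ℝ → M) : Prop :=
  ContinuousOn γ (Icc (0 : ℝ) 1) ∧ γ 0 = y ∧ γ 1 = z ∧
    (∀ t ∈ Icc (0 : ℝ) 1, γ t ∈ F) ∧
    IsRectifiable d γ ∧
    (∃ S : Finset M, ∀ t ∈ Icc (0 : ℝ) 1, γ t ∉ S → γ t ∈ interior F) ∧
    d y z ≥ D * pathLength d γ ^ p

namespace IsChordArcPath

variable {X Y : Type*} [PseudoMetricSpace X] [PseudoMetricSpace Y] {F : Set X} {D : ℝ} {p : ℕ}
  {y z : X} {γ : ℝ → X}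

theorem pathLength_le (hγ : IsChordArcPath dist F D p y z γ) (hD : 0 < D) (hp : p ≠ 0)
    {ℓ : ℝ} (hℓ : 0 ≤ ℓ) (hyz : dist y z ≤ D * ℓ ^ p) : pathLength dist γ ≤ ℓ := by
  obtain ⟨-, -, -, -, hrect, -, hlen⟩ := hγ
  refine (pow_le_pow_iff_left₀ (pathLength_nonneg hrect) hℓ hp).1 ?_
  exact le_of_mul_le_mul_left (hlen.le.trans hyz) hD

theorem dist_le_pathLength (hγ : IsChordArcPath dist F D p y z γ) {t : ℝ}
    (ht : t ∈ Icc (0 : ℝ) 1) : dist (γ t) y ≤ pathLength dist γ := by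
  obtain ⟨-, rfl, -, -, hrect, -, -⟩ := hγ
  exact dist_comm (γ t) (γ 0) ▸ _root_.dist_le_pathLength hrect ht

theorem comp {C V : Set X} {φ : X → Y} {ψ : Y → X} {K : ℝ}
    (hγ : IsChordArcPath dist C D p y z γ) (hD : 0 ≤ D) (hK : 0 < K) (hψ : Continuous ψ)
    (hψφ : ∀ x ∈ V, ψ (φ x) = x) (hγV : ∀ t ∈ Icc (0 : ℝ) 1, γ t ∈ V)
    (hφ : ∀ a ∈ V, ∀ b ∈ V,
      K⁻¹ * dist a b ≤ dist (φ a) (φ b) ∧ dist (φ a) (φ b) ≤ K * dist a b) :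
    IsChordArcPath dist (ψ ⁻¹' C) (D / K ^ (p + 1)) p (φ y) (φ z) (φ ∘ γ) := by
  classical
  obtain ⟨hcont, rfl, rfl, hγC, hrect, ⟨S, hS⟩, hlen⟩ := hγ
  have hlip : LipschitzOnWith (Real.toNNReal K) φ V :=
    LipschitzOnWith.of_dist_le' fun a ha b hb => (hφ a ha b hb).2
  have hψφγ : ∀ t ∈ Icc (0 : ℝ) 1, ψ (φ (γ t)) = γ t := fun t ht => hψφ _ (hγV t ht)
  have hlen' : pathLength dist (φ ∘ γ) ≤ K * pathLength dist γ := by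
    simpa [Real.coe_toNNReal _ hK.le] using pathLength_comp_le_of_lipschitzOnWith hrect hlip hγV
  refine ⟨hlip.continuousOn.comp hcont hγV, rfl, rfl, fun t ht => ?_,
    hrect.comp_lipschitzOnWith hlip hγV, ⟨S.image φ, fun t ht hSt => ?_⟩, ?_⟩
  · simpa [hψφγ t ht] using hγC t ht
  · refine preimage_interior_subset_interior_preimage hψ ?_
    simpa [hψφγ t ht] using hS t ht fun h => hSt (Finset.mem_image_of_mem φ h)
  · have hφγ :=
      (hφ _ (hγV 0 (left_mem_Icc.2 zero_le_one)) _ (hγV 1 (right_mem_Icc.2 zero_le_one))).1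
    calc D / K ^ (p + 1) * pathLength dist (φ ∘ γ) ^ p
        ≤ D / K ^ (p + 1) * (K * pathLength dist γ) ^ p := by
          gcongr
          exact pathLength_nonneg (hrect.comp_lipschitzOnWith hlip hγV)
      _ = K⁻¹ * (D * pathLength dist γ ^ p) := by
          field_simp
          ring
      _ ≤ K⁻¹ * dist (γ 0) (γ 1) := by gcongr
      _ ≤ dist (φ (γ 0)) (φ (γ 1)) := hφγ

end IsChordArcPath

section Preimage

variable {X Y : Type*} [PseudoMetricSpace X] [PseudoMetricSpace Y] {C U : Set X} {φ : X → Y}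
  {ψ : Y → X}

theorem NoNarrowFjords.preimage (hC : NoNarrowFjords dist C) (hψ : Continuous ψ)
    (hψU : ∀ y, ψ y ∈ U) (hψφ : ∀ x ∈ U, ψ (φ x) = x) (hφψ : ∀ y, φ (ψ y) = y)
    (hφ : ∀ x ∈ U, ∃ (V : Set X) (K : ℝ), V ∈ 𝓝 x ∧ V ⊆ U ∧ 1 ≤ K ∧
      ∀ a ∈ V, ∀ b ∈ V,
        K⁻¹ * dist a b ≤ dist (φ a) (φ b) ∧ dist (φ a) (φ b) ≤ K * dist a b) :
    NoNarrowFjords dist (ψ ⁻¹' C) := by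
  intro y hy
  obtain ⟨p, K, D, hp, hK, hKC, hKy, hD, hpaths⟩ := hC (ψ y) hy
  obtain ⟨V, L, hV, hVU, hL, hφV⟩ := hφ (ψ y) (hψU y)
  obtain ⟨s, hs, hsV⟩ := nhds_basis_closedBall.mem_iff.1 hV
  -- Chord–arc paths between points of `K₀` have length at most `s / 2`, so they stay in `V`.
  set t₀ := min (s / 2) (D * (s / 2) ^ p / 2)
  have ht₀ : 0 < t₀ := by positivity
  set K₀ := K ∩ closedBall (ψ y) t₀
  have hK₀V : K₀ ⊆ V := fun x hx =>
    hsV (closedBall_subset_closedBall ((min_le_left _ _).trans (by linarith)) hx.2)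
  have hφV_cont : ContinuousOn φ V :=
    (LipschitzOnWith.of_dist_le' fun a ha b hb => (hφV a ha b hb).2).continuousOn
  have hK₀y : ψ ⁻¹' K₀ ∈ 𝓝[ψ ⁻¹' C] y :=
    hψ.continuousWithinAt.tendsto_nhdsWithin (mapsTo_preimage ψ C)
      (inter_mem hKy (mem_nhdsWithin_of_mem_nhds (closedBall_mem_nhds _ ht₀)))
  refine ⟨p, φ '' K₀, D / L ^ (p + 1), hp,
    (hK.inter_right isClosed_closedBall).image_of_continuousOn (hφV_cont.mono hK₀V), ?_,
    mem_of_superset hK₀y fun q hq => ⟨ψ q, hq, hφψ q⟩, by positivity, ?_⟩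
  · rintro _ ⟨x, hx, rfl⟩
    simpa [mem_preimage, hψφ x (hVU (hK₀V hx))] using hKC hx.1
  rintro _ ⟨a, ha, rfl⟩ _ ⟨b, hb, rfl⟩
  obtain ⟨γ, hγ⟩ : ∃ γ, IsChordArcPath dist C D p a b γ := hpaths a ha.1 b hb.1
  have hab : dist a b ≤ D * (s / 2) ^ p := by
    have := dist_triangle_right a b (ψ y)
    linarith [mem_closedBall.1 ha.2, mem_closedBall.1 hb.2,
      min_le_right (s / 2) (D * (s / 2) ^ p / 2)]
  have hℓ := hγ.pathLength_le hD (by omega) (by positivity) hab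
  refine ⟨φ ∘ γ, hγ.comp hD.le (by linarith) hψ (fun x hx => hψφ x (hVU hx))
    (fun t ht => hsV (mem_closedBall.2 ?_)) hφV⟩
  have := hγ.dist_le_pathLength ht
  have := dist_triangle (γ t) a (ψ y)
  linarith [mem_closedBall.1 ha.2, min_le_left (s / 2) (D * (s / 2) ^ p / 2)]

theorem IsCompact.exists_uniform_lipschitzOnWith_ball_chart {K : Set Y} (hK : IsCompact K)
    (hU : IsOpen U) (hφ : LocallyLipschitzOn U φ) (hψ : LocallyLipschitz ψ)
    (hψU : ∀ y, ψ y ∈ U) :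
    ∃ δ > 0, ∃ Lφ Lψ : ℝ≥0, ∀ z ∈ K, ball (ψ z) δ ⊆ U ∧
      LipschitzOnWith Lφ φ (ball (ψ z) δ) ∧ LipschitzOnWith Lψ ψ (ball z δ) := by
  have hS : IsCompact (ψ '' K) := hK.image hψ.continuous
  have hSU : ψ '' K ⊆ U := image_subset_iff.2 fun y _ => hψU y
  obtain ⟨δU, hδU, hδUU⟩ := hS.exists_thickening_subset_open hU hSU
  obtain ⟨δφ, hδφ, Lφ, hLφ⟩ := hS.exists_forall_lipschitzOnWith_ball fun x hx => by
    simpa only [hU.nhdsWithin_eq (hSU hx)] using hφ (hSU hx)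
  obtain ⟨δψ, hδψ, Lψ, hLψ⟩ := hK.exists_forall_lipschitzOnWith_ball fun y _ => hψ y
  refine ⟨min δU (min δφ δψ), by positivity, Lφ, Lψ, fun z hz => ⟨?_, ?_, ?_⟩⟩
  · exact (ball_subset_ball (min_le_left _ _)).trans
      ((ball_subset_thickening (mem_image_of_mem ψ hz) δU).trans hδUU)
  · exact (hLφ _ (mem_image_of_mem ψ hz)).mono
      (ball_subset_ball ((min_le_right _ _).trans (min_le_left _ _)))
  · exact (hLψ z hz).mono (ball_subset_ball ((min_le_right _ _).trans (min_le_right _ _)))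

theorem HasPolyOutwardCusps.preimage (hC : HasPolyOutwardCusps dist C) (hU : IsOpen U)
    (hφ : LocallyLipschitzOn U φ) (hψ : LocallyLipschitz ψ) (hψU : ∀ y, ψ y ∈ U)
    (hψφ : ∀ x ∈ U, ψ (φ x) = x) (hφψ : ∀ y, φ (ψ y) = y) :
    HasPolyOutwardCusps dist (ψ ⁻¹' C) := by
  intro K hK
  obtain ⟨δ, hδ, Lφ, Lψ, hchart⟩ := hK.exists_uniform_lipschitzOnWith_ball_chart hU hφ hψ hψU
  obtain ⟨ε₀, ρ, r, hε₀, hρ, hr, hcusp⟩ := hC _ (hK.image hψ.continuous)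
  -- `C` is used at scale `ε / c`; `φ` moves its cusp witness by at most `ε / 2`.
  set c : ℝ := 2 * (Lφ + 1)
  have hc : 0 < c := by positivity
  refine ⟨min ε₀ (min δ 1), min (ρ / ((Lψ + 1) * c ^ r)) (1 / 2), r,
    by positivity, by positivity, hr, ?_⟩
  rintro z ⟨hzK, hzF⟩ ε hε hεlt
  obtain ⟨hεε₀, hεδ, hε1⟩ : ε < ε₀ ∧ ε < δ ∧ ε < 1 := by simpa only [lt_min_iff] using hεlt
  obtain ⟨hballU, hφL, hψL⟩ := hchart z hzK
  have hεc : ε / c ≤ ε / 2 := div_le_div_of_nonneg_left hε.le two_pos (by simp [c])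
  obtain ⟨x, hxC, hxz, hxball⟩ := hcusp (ψ z)
    ⟨mem_image_of_mem ψ hzK, hψ.continuous.frontier_preimage_subset C hzF⟩
    (ε / c) (by positivity) (by linarith)
  have hx : x ∈ ball (ψ z) δ := mem_ball.2 (by linarith)
  have hxU : x ∈ U := hballU hx
  have hφx : dist (φ x) z ≤ ε / 2 :=
    calc dist (φ x) z = dist (φ x) (φ (ψ z)) := by rw [hφψ]
      _ ≤ Lφ * dist x (ψ z) := hφL.dist_le_mul x hx (ψ z) (mem_ball_self hδ)
      _ ≤ (Lφ + 1) * (ε / c) := by gcongr; linarith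
      _ = ε / 2 := by field_simp [c]; ring
  refine ⟨φ x, by simpa [hψφ x hxU] using hxC, by linarith, fun y hy => ?_⟩
  have hεr : ε ^ r ≤ ε := by
    simpa using Real.rpow_le_rpow_of_exponent_ge hε hε1.le hr
  have hy₀ : dist (φ x) y < ε / 2 := by
    have : min (ρ / ((Lψ + 1) * c ^ r)) (1 / 2) * ε ^ r ≤ 1 / 2 * ε := by
      gcongr
      exact min_le_right _ _
    linarith
  have hzy : dist z y < ε := by
    have := dist_triangle z (φ x) y
    linarith [dist_comm z (φ x)]
  refine ⟨(hxball (ψ y) ?_).1, hzy⟩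
  calc dist x (ψ y) = dist (ψ (φ x)) (ψ y) := by rw [hψφ x hxU]
    _ ≤ Lψ * dist (φ x) y := hψL.dist_le_mul _ (mem_ball.2 (by linarith)) _
        (mem_ball.2 (by rw [dist_comm]; linarith))
    _ ≤ (Lψ + 1) * dist (φ x) y := by gcongr; simp
    _ < (Lψ + 1) * (ρ / ((Lψ + 1) * c ^ r) * ε ^ r) := by
        gcongr
        exact hy.trans_le (by gcongr; exact min_le_left _ _)
    _ = ρ * (ε / c) ^ r := by
        rw [Real.div_rpow hε.le hc.le]
        field_simp

end Preimage

theorem cuspCondition_image_of_locally_biLipschitz_chart_general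
    {M : Type*} [MetricSpace M]
    (C U : Set M) (hC : IsClosed C)
    (hcusp : CuspCondition (fun a b => dist a b) C)
    (hU : IsOpen U) {n : ℕ}
    (φ : M → EuclideanSpace ℝ (Fin n)) (ψ : EuclideanSpace ℝ (Fin n) → M)
    (hψcont : Continuous ψ)
    (hψU : ∀ p, ψ p ∈ U)
    (hinv₁ : ∀ x ∈ U, ψ (φ x) = x) (hinv₂ : ∀ p, φ (ψ p) = p)
    (hφlip : ∀ x ∈ U, ∃ (V : Set M) (K : ℝ), V ∈ nhds x ∧ V ⊆ U ∧ 1 ≤ K ∧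
      ∀ a ∈ V, ∀ b ∈ V,
        K⁻¹ * dist a b ≤ dist (φ a) (φ b) ∧ dist (φ a) (φ b) ≤ K * dist a b)
    (hψlip : ∀ p : EuclideanSpace ℝ (Fin n),
      ∃ (W : Set (EuclideanSpace ℝ (Fin n))) (K : ℝ), W ∈ nhds p ∧ 1 ≤ K ∧
      ∀ a ∈ W, ∀ b ∈ W,
        K⁻¹ * dist a b ≤ dist (ψ a) (ψ b) ∧ dist (ψ a) (ψ b) ≤ K * dist a b) :
    IsClosed (φ '' (C ∩ U)) ∧
      CuspCondition (fun a b => dist a b) (φ '' (C ∩ U)) := by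
  have himage : φ '' (C ∩ U) = ψ ⁻¹' C := by
    ext y
    refine ⟨?_, fun hy => ⟨ψ y, ⟨hy, hψU y⟩, hinv₂ y⟩⟩
    rintro ⟨x, ⟨hxC, hxU⟩, rfl⟩
    simpa [mem_preimage, hinv₁ x hxU] using hxC
  have hφ : LocallyLipschitzOn U φ := fun x hx => by
    obtain ⟨V, K, hV, -, -, hVK⟩ := hφlip x hx
    exact ⟨_, V, mem_nhdsWithin_of_mem_nhds hV,
      LipschitzOnWith.of_dist_le' fun a ha b hb => (hVK a ha b hb).2⟩
  have hψ : LocallyLipschitz ψ := fun y => by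
    obtain ⟨W, K, hW, -, hWK⟩ := hψlip y
    exact ⟨_, W, hW, LipschitzOnWith.of_dist_le' fun a ha b hb => (hWK a ha b hb).2⟩
  rw [himage]
  exact ⟨hC.preimage hψcont, hcusp.1.preimage hU hφ hψ hψU hinv₁ hinv₂,
    hcusp.2.preimage hψcont hψU hinv₁ hinv₂ hφlip⟩

/-- If `C ⊆ M` is closed and satisfies the cusp condition in a locally compact complete
metric space `M`, and `φ : U → ℝⁿ` is a homeomorphism from an open set `U ⊆ M` onto `ℝⁿ`
such that `φ` and its inverse `ψ` are locally bi-Lipschitz, then `φ(C ∩ U)` is a closed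
subset of `ℝⁿ` satisfying the cusp condition for the Euclidean metric. -/
theorem cuspCondition_image_of_locally_biLipschitz_chart
    {M : Type*} [MetricSpace M] [LocallyCompactSpace M] [CompleteSpace M]
    (C U : Set M) (hC : IsClosed C)
    (hcusp : CuspCondition (fun a b => dist a b) C)
    (hU : IsOpen U) {n : ℕ}
    (φ : M → EuclideanSpace ℝ (Fin n)) (ψ : EuclideanSpace ℝ (Fin n) → M)
    (hφcont : ContinuousOn φ U) (hψcont : Continuous ψ)
    (hψU : ∀ p, ψ p ∈ U)
    (hinv₁ : ∀ x ∈ U, ψ (φ x) = x) (hinv₂ : ∀ p, φ (ψ p) = p)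
    (hφlip : ∀ x ∈ U, ∃ (V : Set M) (K : ℝ), V ∈ nhds x ∧ V ⊆ U ∧ 1 ≤ K ∧
      ∀ a ∈ V, ∀ b ∈ V,
        K⁻¹ * dist a b ≤ dist (φ a) (φ b) ∧ dist (φ a) (φ b) ≤ K * dist a b)
    (hψlip : ∀ p : EuclideanSpace ℝ (Fin n),
      ∃ (W : Set (EuclideanSpace ℝ (Fin n))) (K : ℝ), W ∈ nhds p ∧ 1 ≤ K ∧
      ∀ a ∈ W, ∀ b ∈ W,
        K⁻¹ * dist a b ≤ dist (ψ a) (ψ b) ∧ dist (ψ a) (ψ b) ≤ K * dist a b) :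
    IsClosed (φ '' (C ∩ U)) ∧
      CuspCondition (fun a b => dist a b) (φ '' (C ∩ U)) :=
  cuspCondition_image_of_locally_biLipschitz_chart_general C U hC hcusp hU φ ψ hψcont hψU hinv₁
    hinv₂ hφlip hψlip
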